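/- arXiv:2202.02863 — 3 statements merged into one kernel-verified Lean document; each statement's English description precedes it below -/
import Mathlib

section
/- (Lemma 1: global asymptotic stability of the reduced system.) Let c ∈ ℝ^m be nonzero, μ > 0, and ε_u > 0. Consider the linear system on ℝ^m × ℝ given by u̇ = (1/ε_u)(−(c cᵀ + μI)u + c ē), ē̇ = −cᵀu. Then the equilibrium at the origin is globally asymptotically stable: the origin is Lyapunov stable and every solution (u(t), ē(t)) converges to (0, 0) as t → ∞. -/
/-!
Along solutions, `εu ‖u‖² + ē²` has derivative `-2 (cᵀu)² - 2 μ ‖u‖² ≤ 0`, which gives no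
decay in `ē`. Adding a small cross term `-2 α εu ē cᵀu` produces a Lyapunov function `W`, still
comparable to `εu ‖u‖² + ē²`, whose derivative is bounded by `-k W` for some `k > 0`. Grönwall's
inequality then gives exponential decay of `‖u‖² + ē²`, hence both Lyapunov stability and
convergence to the origin.
-/

open Matrix

/-- A solution (on the time interval `[0,∞)`) of the reduced inverse-learning system
`u̇ = (1/ε_u)(−(ccᵀ + μI)u + c ē)`, `ē̇ = −cᵀu`. -/
def IsReducedSolution {m : ℕ} (c : Fin m → ℝ) (μ εu : ℝ)
    (u : ℝ → EuclideanSpace ℝ (Fin m)) (ebar : ℝ → ℝ) : Prop :=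
  ∀ t : ℝ, 0 ≤ t →
    HasDerivWithinAt u
      (WithLp.toLp 2 (εu⁻¹ • (ebar t • c -
        (vecMulVec c c + μ • (1 : Matrix (Fin m) (Fin m) ℝ)).mulVec (u t)) : Fin m → ℝ) :
        EuclideanSpace ℝ (Fin m)) (Set.Ici 0) t ∧
    HasDerivWithinAt ebar (-(c ⬝ᵥ u t)) (Set.Ici 0) t

open Real Filter Topology Set
open scoped RealInnerProductSpace

theorem le_mul_exp_of_hasDerivWithinAt_le {f f' : ℝ → ℝ} {k : ℝ}
    (hf : ∀ t ∈ Ici (0 : ℝ), HasDerivWithinAt f (f' t) (Ici 0) t)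
    (hf' : ∀ t ∈ Ici (0 : ℝ), f' t ≤ -k * f t) {t : ℝ} (ht : 0 ≤ t) :
    f t ≤ f 0 * exp (-k * t) := by
  have hcont : ContinuousOn f (Icc 0 t) := fun x hx ↦
    (hf x hx.1).continuousWithinAt.mono Icc_subset_Ici_self
  have := le_gronwallBound_of_liminf_deriv_right_le (K := -k) (ε := 0) hcont
    (fun x hx _ hr ↦ ((hf x hx.1).mono (Ici_subset_Ici.2 hx.1)).liminf_right_slope_le hr)
    le_rfl (fun x hx ↦ by simpa using hf' x hx.1) t ⟨ht, le_rfl⟩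
  simpa [gronwallBound_ε0] using this

theorem tendsto_zero_of_sq_add_sq_le_mul_exp {E : Type*} [NormedAddCommGroup E]
    {u : ℝ → E} {e : ℝ → ℝ} {A k : ℝ} (hk : 0 < k)
    (h : ∀ t, 0 ≤ t → ‖u t‖ ^ 2 + e t ^ 2 ≤ A * exp (-k * t)) :
    Tendsto u atTop (𝓝 0) ∧ Tendsto e atTop (𝓝 0) := by
  have hexp : Tendsto (fun t ↦ A * exp (-k * t)) atTop (𝓝 0) := by
    simpa using (tendsto_exp_atBot.comp
      (tendsto_id.const_mul_atTop_of_neg (neg_lt_zero.2 hk))).const_mul A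
  have hsqrt : Tendsto (fun t ↦ √(A * exp (-k * t))) atTop (𝓝 0) := by
    simpa using hexp.sqrt
  constructor
  · refine squeeze_zero_norm' ?_ hsqrt
    filter_upwards [eventually_ge_atTop 0] with t ht
    have : ‖u t‖ ^ 2 ≤ A * exp (-k * t) := by nlinarith [h t ht, sq_nonneg (e t)]
    simpa using abs_le_sqrt this
  · refine squeeze_zero_norm' ?_ hsqrt
    filter_upwards [eventually_ge_atTop 0] with t ht
    exact abs_le_sqrt (by nlinarith [h t ht, sq_nonneg ‖u t‖])

theorem lyapunovStable_of_sq_add_sq_le {E : Type*} [NormedAddCommGroup E]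
    (P : (ℝ → E) → (ℝ → ℝ) → Prop) {K : ℝ} (hK : 0 < K)
    (h : ∀ u e, P u e → ∀ t, 0 ≤ t → ‖u t‖ ^ 2 + e t ^ 2 ≤ K * (‖u 0‖ ^ 2 + e 0 ^ 2)) :
    ∀ ε > (0 : ℝ), ∃ δ > (0 : ℝ), ∀ u e, P u e → ‖u 0‖ < δ → |e 0| < δ →
      ∀ t, 0 ≤ t → ‖u t‖ < ε ∧ |e t| < ε := by
  intro ε hε
  refine ⟨ε / √(2 * K), by positivity, fun u e hue hu he t ht ↦ ?_⟩
  have hδ : (ε / √(2 * K)) ^ 2 * (2 * K) = ε ^ 2 := by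
    rw [div_pow, sq_sqrt (by positivity)]; field_simp
  have hu2 := pow_lt_pow_left₀ hu (norm_nonneg _) two_ne_zero
  have he2 := pow_lt_pow_left₀ he (abs_nonneg _) two_ne_zero
  rw [sq_abs] at he2
  have hS : ‖u t‖ ^ 2 + e t ^ 2 < ε ^ 2 := by nlinarith [h u e hue t ht]
  constructor
  · exact lt_of_pow_lt_pow_left₀ 2 hε.le (by nlinarith [sq_nonneg (e t)])
  · exact abs_lt_of_sq_lt_sq (by nlinarith [sq_nonneg ‖u t‖]) hε.le

theorem exists_reducedLyapunov_weight {C μ εu : ℝ} (hC : 0 < C) (hμ : 0 ≤ μ) (hεu : 0 < εu) :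
    ∃ α > 0, α * εu ≤ 1 / 2 ∧ α * C ≤ 1 / 2 ∧ α * (2 * εu * C + (C + μ) ^ 2) ≤ 2 * C := by
  refine ⟨C / (2 * (εu * C + (C + μ) ^ 2)), by positivity, ?_, ?_, ?_⟩ <;>
  rw [div_mul_eq_mul_div, div_le_iff₀ (by positivity)] <;>
  nlinarith [sq_nonneg μ, mul_pos hεu hC, mul_pos hC hC, mul_nonneg hC.le hμ]

section ReducedLyapunov

variable {E : Type*} [NormedAddCommGroup E] [InnerProductSpace ℝ E]

def reducedLyapunov (c : E) (εu α : ℝ) (v : E) (e : ℝ) : ℝ :=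
  εu * ‖v‖ ^ 2 + e ^ 2 - 2 * α * εu * (e * ⟪c, v⟫)

def reducedLyapunovDeriv (c : E) (μ εu α : ℝ) (v : E) (e : ℝ) : ℝ :=
  -2 * ⟪c, v⟫ ^ 2 - 2 * μ * ‖v‖ ^ 2 + 2 * α * εu * ⟪c, v⟫ ^ 2 - 2 * α * ‖c‖ ^ 2 * e ^ 2
    + 2 * α * (‖c‖ ^ 2 + μ) * (e * ⟪c, v⟫)

theorem reducedLyapunov_bounds (c : E) {εu α : ℝ} (hεu : 0 < εu) (hα : 0 ≤ α)
    (hαε : α * εu ≤ 1 / 2) (hαc : α * ‖c‖ ^ 2 ≤ 1 / 2) (v : E) (e : ℝ) :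
    (εu * ‖v‖ ^ 2 + e ^ 2) / 2 ≤ reducedLyapunov c εu α v e ∧
      reducedLyapunov c εu α v e ≤ 3 * (εu * ‖v‖ ^ 2 + e ^ 2) / 2 := by
  have hcs : ⟪c, v⟫ ^ 2 ≤ ‖c‖ ^ 2 * ‖v‖ ^ 2 := by
    rw [← mul_pow, ← sq_abs]
    exact pow_le_pow_left₀ (abs_nonneg _) (abs_real_inner_le_norm c v) 2
  have hαε' : 0 ≤ α * εu := mul_nonneg hα hεu.le
  -- `2 |e ⟪c, v⟫| ≤ e ^ 2 + ⟪c, v⟫ ^ 2 ≤ e ^ 2 + ‖c‖ ^ 2 ‖v‖ ^ 2`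
  unfold reducedLyapunov
  constructor <;>
  nlinarith [mul_nonneg hαε' (sq_nonneg (e - ⟪c, v⟫)), mul_nonneg hαε' (sq_nonneg (e + ⟪c, v⟫)),
    mul_le_mul_of_nonneg_left hcs hαε',
    mul_le_mul_of_nonneg_right hαc (mul_nonneg hεu.le (sq_nonneg ‖v‖)),
    mul_le_mul_of_nonneg_right hαε (sq_nonneg e)]

theorem HasDerivWithinAt.reducedLyapunov {c : E} {μ εu α : ℝ} (hεu : εu ≠ 0)
    {u : ℝ → E} {e : ℝ → ℝ} {s : Set ℝ} {t : ℝ}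
    (hu : HasDerivWithinAt u (εu⁻¹ • (e t • c - (⟪c, u t⟫ • c + μ • u t))) s t)
    (he : HasDerivWithinAt e (-⟪c, u t⟫) s t) :
    HasDerivWithinAt (fun t ↦ reducedLyapunov c εu α (u t) (e t))
      (reducedLyapunovDeriv c μ εu α (u t) (e t)) s t := by
  have hnorm := hu.norm_sq
  have hinner := (hasDerivWithinAt_const t s c).inner ℝ hu
  refine (((hnorm.const_mul εu).add (he.pow 2)).sub
    ((he.mul hinner).const_mul (2 * α * εu))).congr_deriv ?_
  simp only [reducedLyapunovDeriv, inner_smul_right, inner_sub_right, inner_add_right,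
    inner_zero_left, real_inner_self_eq_norm_sq, real_inner_comm (u t) c]
  field_simp
  ring

theorem reducedLyapunovDeriv_le (c : E) (hc : c ≠ 0) {μ εu α : ℝ} (hα : 0 ≤ α)
    (hα' : α * (2 * εu * ‖c‖ ^ 2 + (‖c‖ ^ 2 + μ) ^ 2) ≤ 2 * ‖c‖ ^ 2) (v : E) (e : ℝ) :
    reducedLyapunovDeriv c μ εu α v e ≤ -(2 * μ * ‖v‖ ^ 2 + α * ‖c‖ ^ 2 * e ^ 2) := by
  have hC : 0 < ‖c‖ ^ 2 := by positivity
  refine le_of_mul_le_mul_left ?_ hC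
  -- completing the square in `e`
  have key : ‖c‖ ^ 2 *
      (reducedLyapunovDeriv c μ εu α v e + (2 * μ * ‖v‖ ^ 2 + α * ‖c‖ ^ 2 * e ^ 2)) =
      -α * (‖c‖ ^ 2 * e - (‖c‖ ^ 2 + μ) * ⟪c, v⟫) ^ 2 -
        ⟪c, v⟫ ^ 2 * (2 * ‖c‖ ^ 2 - α * (2 * εu * ‖c‖ ^ 2 + (‖c‖ ^ 2 + μ) ^ 2)) := by
    unfold reducedLyapunovDeriv; ring
  nlinarith [mul_nonneg hα (sq_nonneg (‖c‖ ^ 2 * e - (‖c‖ ^ 2 + μ) * ⟪c, v⟫)),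
    mul_nonneg (sq_nonneg ⟪c, v⟫) (sub_nonneg.2 hα')]

theorem reducedLyapunovDeriv_le_neg_mul (c : E) (hc : c ≠ 0) {μ εu α : ℝ} (hμ : 0 < μ)
    (hεu : 0 < εu) (hα : 0 ≤ α) (hαε : α * εu ≤ 1 / 2) (hαc : α * ‖c‖ ^ 2 ≤ 1 / 2)
    (hα' : α * (2 * εu * ‖c‖ ^ 2 + (‖c‖ ^ 2 + μ) ^ 2) ≤ 2 * ‖c‖ ^ 2) (v : E) (e : ℝ) :
    reducedLyapunovDeriv c μ εu α v e ≤
      -(2 / 3 * min (2 * μ / εu) (α * ‖c‖ ^ 2)) * reducedLyapunov c εu α v e := by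
  set r := min (2 * μ / εu) (α * ‖c‖ ^ 2)
  have hr : 0 ≤ r := le_min (by positivity) (by positivity)
  have hrε : r * εu ≤ 2 * μ := (le_div_iff₀ hεu).1 (min_le_left _ _)
  have hrc : r ≤ α * ‖c‖ ^ 2 := min_le_right _ _
  have hupper := (reducedLyapunov_bounds c hεu hα hαε hαc v e).2
  nlinarith [reducedLyapunovDeriv_le c hc hα hα' v e, mul_le_mul_of_nonneg_left hupper hr,
    mul_le_mul_of_nonneg_right hrε (sq_nonneg ‖v‖), mul_le_mul_of_nonneg_right hrc (sq_nonneg e)]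

theorem exists_sq_norm_add_sq_le_mul_exp (c : E) (hc : c ≠ 0) {μ εu : ℝ} (hμ : 0 < μ)
    (hεu : 0 < εu) :
    ∃ K > 0, ∃ k > 0, ∀ (u : ℝ → E) (e : ℝ → ℝ),
      (∀ t ∈ Ici (0 : ℝ), HasDerivWithinAt u (εu⁻¹ • (e t • c - (⟪c, u t⟫ • c + μ • u t)))
        (Ici 0) t) →
      (∀ t ∈ Ici (0 : ℝ), HasDerivWithinAt e (-⟪c, u t⟫) (Ici 0) t) →
      ∀ t, 0 ≤ t → ‖u t‖ ^ 2 + e t ^ 2 ≤ K * (‖u 0‖ ^ 2 + e 0 ^ 2) * exp (-k * t) := by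
  obtain ⟨α, hα, hαε, hαc, hα'⟩ :=
    exists_reducedLyapunov_weight (by positivity : 0 < ‖c‖ ^ 2) hμ.le hεu
  refine ⟨3 * (εu + 1) ^ 2 / εu, by positivity, 2 / 3 * min (2 * μ / εu) (α * ‖c‖ ^ 2),
    by positivity, fun u e hu he t ht ↦ ?_⟩
  have hdecay := le_mul_exp_of_hasDerivWithinAt_le
    (fun s hs ↦ (hu s hs).reducedLyapunov (α := α) hεu.ne' (he s hs))
    (fun s _ ↦ reducedLyapunovDeriv_le_neg_mul c hc hμ hεu hα.le hαε hαc hα' (u s) (e s)) ht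
  have hlower := (reducedLyapunov_bounds c hεu hα.le hαε hαc (u t) (e t)).1
  have hupper := (reducedLyapunov_bounds c hεu hα.le hαε hαc (u 0) (e 0)).2
  set ρ := exp (-(2 / 3 * min (2 * μ / εu) (α * ‖c‖ ^ 2)) * t)
  have hρ : 0 < ρ := exp_pos _
  have hS : εu * (‖u t‖ ^ 2 + e t ^ 2) ≤ (εu + 1) * (εu * ‖u t‖ ^ 2 + e t ^ 2) := by
    nlinarith [sq_nonneg ‖u t‖, sq_nonneg (e t), mul_nonneg hεu.le (sq_nonneg (e t)),
      mul_nonneg (mul_nonneg hεu.le hεu.le) (sq_nonneg ‖u t‖)]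
  have hN : εu * ‖u 0‖ ^ 2 + e 0 ^ 2 ≤ (εu + 1) * (‖u 0‖ ^ 2 + e 0 ^ 2) := by
    nlinarith [sq_nonneg ‖u 0‖, sq_nonneg (e 0), mul_nonneg hεu.le (sq_nonneg (e 0))]
  rw [div_mul_eq_mul_div, div_mul_eq_mul_div, le_div_iff₀ hεu]
  calc (‖u t‖ ^ 2 + e t ^ 2) * εu ≤ (εu + 1) * (εu * ‖u t‖ ^ 2 + e t ^ 2) := by linarith
    _ ≤ (εu + 1) * (2 * reducedLyapunov c εu α (u 0) (e 0) * ρ) := by gcongr; linarith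
    _ ≤ (εu + 1) * (3 * ((εu + 1) * (‖u 0‖ ^ 2 + e 0 ^ 2)) * ρ) := by
      gcongr (εu + 1) * (?_ * ρ); linarith
    _ = _ := by ring

end ReducedLyapunov

theorem dotProduct_ofLp_eq_inner {ι : Type*} [Fintype ι] (c : ι → ℝ) (v : EuclideanSpace ℝ ι) :
    c ⬝ᵥ v = ⟪WithLp.toLp 2 c, v⟫ := by
  rw [EuclideanSpace.inner_eq_star_dotProduct, star_trivial, dotProduct_comm]

theorem toLp_smul_sub_vecMulVec_mulVec {ι : Type*} [Fintype ι] [DecidableEq ι] (c : ι → ℝ)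
    (μ εu e : ℝ) (v : EuclideanSpace ℝ ι) :
    WithLp.toLp 2 (εu⁻¹ • (e • c - (vecMulVec c c + μ • (1 : Matrix ι ι ℝ)) *ᵥ v)) =
      εu⁻¹ • (e • WithLp.toLp 2 c - (⟪WithLp.toLp 2 c, v⟫ • WithLp.toLp 2 c + μ • v)) := by
  simp only [add_mulVec, vecMulVec_mulVec, smul_mulVec, one_mulVec, dotProduct_ofLp_eq_inner,
    op_smul_eq_smul, WithLp.toLp_smul, WithLp.toLp_sub, WithLp.toLp_add, WithLp.toLp_ofLp]

theorem IsReducedSolution.hasDerivWithinAt {m : ℕ} {c : Fin m → ℝ} {μ εu : ℝ}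
    {u : ℝ → EuclideanSpace ℝ (Fin m)} {ebar : ℝ → ℝ} (h : IsReducedSolution c μ εu u ebar)
    {t : ℝ} (ht : 0 ≤ t) :
    HasDerivWithinAt u (εu⁻¹ • (ebar t • WithLp.toLp 2 c -
        (⟪WithLp.toLp 2 c, u t⟫ • WithLp.toLp 2 c + μ • u t))) (Ici 0) t ∧
      HasDerivWithinAt ebar (-⟪WithLp.toLp 2 c, u t⟫) (Ici 0) t := by
  rw [← toLp_smul_sub_vecMulVec_mulVec, ← dotProduct_ofLp_eq_inner]
  exact h t ht

/-- **Lemma 1.** For `c ≠ 0`, `μ > 0`, `ε_u > 0`, the origin of the reduced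
system `u̇ = (1/ε_u)(−(ccᵀ + μI)u + c ē)`, `ē̇ = −cᵀu` is globally asymptotically stable:
it is Lyapunov stable and every solution converges to the origin as `t → ∞`. -/
theorem reduced_system_globally_asymptotically_stable {m : ℕ}
    (c : Fin m → ℝ) (hc : c ≠ 0) (μ εu : ℝ) (hμ : 0 < μ) (hεu : 0 < εu) :
    ((∀ ε > (0 : ℝ), ∃ δ > (0 : ℝ),
      ∀ (u : ℝ → EuclideanSpace ℝ (Fin m)) (ebar : ℝ → ℝ),
        IsReducedSolution c μ εu u ebar →
        ‖u 0‖ < δ → |ebar 0| < δ →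
        ∀ t : ℝ, 0 ≤ t → ‖u t‖ < ε ∧ |ebar t| < ε) ∧
    (∀ (u : ℝ → EuclideanSpace ℝ (Fin m)) (ebar : ℝ → ℝ),
        IsReducedSolution c μ εu u ebar →
        Filter.Tendsto u Filter.atTop (nhds 0) ∧
        Filter.Tendsto ebar Filter.atTop (nhds 0))) := by
  obtain ⟨K, hK, k, hk, hdecay⟩ :=
    exists_sq_norm_add_sq_le_mul_exp (WithLp.toLp 2 c) (by simpa using hc) hμ hεu
  have hbound : ∀ u ebar, IsReducedSolution c μ εu u ebar → ∀ t, 0 ≤ t →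
      ‖u t‖ ^ 2 + ebar t ^ 2 ≤ K * (‖u 0‖ ^ 2 + ebar 0 ^ 2) * exp (-k * t) := fun u ebar h ↦
    hdecay u ebar (fun t ht ↦ (h.hasDerivWithinAt ht).1) (fun t ht ↦ (h.hasDerivWithinAt ht).2)
  refine ⟨lyapunovStable_of_sq_add_sq_le _ hK fun u ebar h t ht ↦ ?_,
    fun u ebar h ↦ tendsto_zero_of_sq_add_sq_le_mul_exp hk (hbound u ebar h)⟩
  exact (hbound u ebar h t ht).trans
    (mul_le_of_le_one_right (by positivity)
      (exp_le_one_iff.2 (mul_nonpos_of_nonpos_of_nonneg (neg_nonpos.2 hk.le) ht)))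
end

section
/- (Hurwitz property of the reduced-system matrix.) Let c ∈ ℝ^m be nonzero, μ > 0, ε_u > 0. The (m+1)×(m+1) block matrix A = [ −(1/ε_u)(c cᵀ + μI), (1/ε_u) c ; −cᵀ, 0 ] has all eigenvalues with strictly negative real part. -/
open Matrix

/-- Hurwitz property of the reduced-system matrix: for `c ≠ 0`, `μ > 0`,
`ε_u > 0`, every complex eigenvalue of the block matrix
`A = [ −(1/ε_u)(ccᵀ + μI), (1/ε_u)c ; −cᵀ, 0 ]` has strictly negative real part. -/
theorem reduced_system_matrix_hurwitz {m : ℕ}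
    (c : Fin m → ℝ) (hc : c ≠ 0) (μ εu : ℝ) (hμ : 0 < μ) (hεu : 0 < εu)
    (A : Matrix (Fin m ⊕ Unit) (Fin m ⊕ Unit) ℝ)
    (hA : A = Matrix.fromBlocks
      (-(εu⁻¹ • (vecMulVec c c + μ • (1 : Matrix (Fin m) (Fin m) ℝ))))
      (Matrix.of fun i (_ : Unit) => εu⁻¹ * c i)
      (Matrix.of fun (_ : Unit) j => -(c j))
      (0 : Matrix Unit Unit ℝ)) :
    ∀ z ∈ spectrum ℂ (A.map (Complex.ofReal ·)), z.re < 0 := by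
  intro z hz
  classical
  set M : Matrix (Fin m ⊕ Unit) (Fin m ⊕ Unit) ℂ := A.map (Complex.ofReal ·) with hMdef
  have hεu' : (εu : ℂ) ≠ 0 := by
    exact_mod_cast hεu.ne'
  -- from spectrum membership get a nonzero eigenvector
  have hz' : ¬ IsUnit (algebraMap ℂ (Matrix (Fin m ⊕ Unit) (Fin m ⊕ Unit) ℂ) z - M) :=
    spectrum.mem_iff.mp hz
  have hdet : (algebraMap ℂ (Matrix (Fin m ⊕ Unit) (Fin m ⊕ Unit) ℂ) z - M).det = 0 := by
    by_contra h
    exact hz' ((Matrix.isUnit_iff_isUnit_det _).mpr (isUnit_iff_ne_zero.mpr h))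
  obtain ⟨v, hv0, hv⟩ := Matrix.exists_mulVec_eq_zero_iff.mpr hdet
  have hMv : M.mulVec v = z • v := by
    rw [Matrix.sub_mulVec] at hv
    have h2 : (algebraMap ℂ (Matrix (Fin m ⊕ Unit) (Fin m ⊕ Unit) ℂ) z).mulVec v = z • v := by
      rw [Algebra.algebraMap_eq_smul_one, Matrix.smul_mulVec, Matrix.one_mulVec]
    rw [h2] at hv
    exact (sub_eq_zero.mp hv).symm
  set u : Fin m → ℂ := fun i => v (Sum.inl i) with hu
  set e : ℂ := v (Sum.inr ()) with he'
  set s : ℂ := ∑ j, (c j : ℂ) * u j with hs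
  -- block form of M
  have hMblocks : M = Matrix.fromBlocks
      ((-(εu⁻¹ • (vecMulVec c c + μ • (1 : Matrix (Fin m) (Fin m) ℝ)))).map (Complex.ofReal ·))
      ((Matrix.of fun i (_ : Unit) => εu⁻¹ * c i).map (Complex.ofReal ·))
      ((Matrix.of fun (_ : Unit) j => -(c j)).map (Complex.ofReal ·))
      ((0 : Matrix Unit Unit ℝ).map (Complex.ofReal ·)) := by
    rw [hMdef, hA, Matrix.fromBlocks_map]
  have e11 : ∀ i j, M (Sum.inl i) (Sum.inl j)
      = -((εu : ℂ)⁻¹ * ((c i : ℂ) * (c j : ℂ) + (μ : ℂ) * (if i = j then 1 else 0))) := by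
    intro i j
    rw [hMblocks]
    simp only [Matrix.fromBlocks_apply₁₁, Matrix.map_apply, Matrix.neg_apply,
      Matrix.smul_apply, Matrix.add_apply, Matrix.vecMulVec_apply, Matrix.one_apply,
      smul_eq_mul]
    split_ifs <;> push_cast <;> ring
  have e12 : ∀ i, M (Sum.inl i) (Sum.inr ()) = (εu : ℂ)⁻¹ * (c i : ℂ) := by
    intro i
    rw [hMblocks]
    simp only [Matrix.fromBlocks_apply₁₂, Matrix.map_apply, Matrix.of_apply]
    push_cast
    ring
  have e21 : ∀ j, M (Sum.inr ()) (Sum.inl j) = -(c j : ℂ) := by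
    intro j
    rw [hMblocks]
    simp only [Matrix.fromBlocks_apply₂₁, Matrix.map_apply, Matrix.of_apply]
    push_cast
    ring
  have e22 : M (Sum.inr ()) (Sum.inr ()) = 0 := by
    rw [hMblocks]
    simp
  -- eigen equations, componentwise
  have hEig : ∀ k, (∑ j, M k (Sum.inl j) * u j) + M k (Sum.inr ()) * e = z * v k := by
    intro k
    have h := congrFun hMv k
    simpa [Matrix.mulVec, dotProduct, Fintype.sum_sum_type] using h
  have hi : ∀ i, z * u i = -((εu : ℂ)⁻¹ * ((c i : ℂ) * s + (μ : ℂ) * u i))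
      + (εu : ℂ)⁻¹ * (c i : ℂ) * e := by
    intro i
    have h := hEig (Sum.inl i)
    have hsum : (∑ j, M (Sum.inl i) (Sum.inl j) * u j)
        = -((εu : ℂ)⁻¹ * ((c i : ℂ) * s + (μ : ℂ) * u i)) := by
      have h1 : ∀ j, M (Sum.inl i) (Sum.inl j) * u j
          = (-((εu : ℂ)⁻¹ * (c i : ℂ))) * ((c j : ℂ) * u j)
            + (-((εu : ℂ)⁻¹ * (μ : ℂ))) * ((if i = j then (1 : ℂ) else 0) * u j) := by
        intro j
        rw [e11]
        ring
      rw [Finset.sum_congr rfl (fun j _ => h1 j), Finset.sum_add_distrib,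
        ← Finset.mul_sum, ← Finset.mul_sum]
      have h2 : (∑ j, (if i = j then (1 : ℂ) else 0) * u j) = u i := by
        simp
      rw [h2, ← hs]
      ring
    rw [hsum, e12] at h
    exact h.symm
  have hee : z * e = -s := by
    have h := hEig (Sum.inr ())
    have hsum : (∑ j, M (Sum.inr ()) (Sum.inl j) * u j) = -s := by
      rw [hs, ← Finset.sum_neg_distrib]
      exact Finset.sum_congr rfl fun j _ => by rw [e21]; ring
    rw [hsum, e22] at h
    simpa using h.symm
  -- case: u = 0
  by_cases hu0 : ∀ i, u i = 0
  · exfalso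
    have hs0 : s = 0 := by
      rw [hs]
      exact Finset.sum_eq_zero fun j _ => by rw [hu0 j]; ring
    obtain ⟨i, hci⟩ := Function.ne_iff.mp hc
    have h := hi i
    rw [hu0 i, hs0] at h
    have hci' : (c i : ℂ) ≠ 0 := by exact_mod_cast hci
    have he0 : e = 0 := by
      field_simp at h
      have hce : (c i : ℂ) * e = 0 := by linear_combination -h
      exact (mul_eq_zero.mp hce).resolve_left hci'
    apply hv0
    funext k
    cases k with
    | inl i => exact hu0 i
    | inr _ => exact he0
  -- main case: Lyapunov argument
  · set nuR : ℝ := ∑ i, Complex.normSq (u i) with hnuR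
    have hnuRpos : 0 < nuR := by
      obtain ⟨i, hi0⟩ := not_forall.mp hu0
      have : 0 < Complex.normSq (u i) := Complex.normSq_pos.mpr hi0
      refine lt_of_lt_of_le this ?_
      exact Finset.single_le_sum (f := fun i => Complex.normSq (u i))
        (fun j _ => Complex.normSq_nonneg _) (Finset.mem_univ i)
    have hnu : (∑ i, (starRingEnd ℂ) (u i) * u i) = (nuR : ℂ) := by
      rw [hnuR]
      push_cast
      exact Finset.sum_congr rfl fun i _ => by
        rw [Complex.normSq_eq_conj_mul_self]
    have hconjs : (∑ i, (c i : ℂ) * (starRingEnd ℂ) (u i)) = (starRingEnd ℂ) s := by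
      rw [hs, map_sum]
      exact Finset.sum_congr rfl fun i _ => by
        rw [_root_.map_mul, Complex.conj_ofReal]
    -- key identity
    have key : z * ((εu : ℂ) * (nuR : ℂ) + (starRingEnd ℂ) e * e)
        = -((starRingEnd ℂ) s * s) - (μ : ℂ) * (nuR : ℂ)
          + ((starRingEnd ℂ) s * e - s * (starRingEnd ℂ) e) := by
      have hA1 : (εu : ℂ) * (z * (∑ i, (starRingEnd ℂ) (u i) * u i))
          = -((starRingEnd ℂ) s * s) - (μ : ℂ) * (∑ i, (starRingEnd ℂ) (u i) * u i)
            + (starRingEnd ℂ) s * e := by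
        have h1 : ∀ i, (εu : ℂ) * ((starRingEnd ℂ) (u i) * (z * u i))
            = -(((c i : ℂ) * (starRingEnd ℂ) (u i)) * s
                + (μ : ℂ) * ((starRingEnd ℂ) (u i) * u i))
              + ((c i : ℂ) * (starRingEnd ℂ) (u i)) * e := by
          intro i
          rw [hi i]
          field_simp
        calc (εu : ℂ) * (z * (∑ i, (starRingEnd ℂ) (u i) * u i))
            = ∑ i, (εu : ℂ) * ((starRingEnd ℂ) (u i) * (z * u i)) := by
              rw [Finset.mul_sum, Finset.mul_sum]
              exact Finset.sum_congr rfl fun i _ => by ring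
          _ = ∑ i, (-(((c i : ℂ) * (starRingEnd ℂ) (u i)) * s
                + (μ : ℂ) * ((starRingEnd ℂ) (u i) * u i))
              + ((c i : ℂ) * (starRingEnd ℂ) (u i)) * e) :=
              Finset.sum_congr rfl fun i _ => h1 i
          _ = -((∑ i, (c i : ℂ) * (starRingEnd ℂ) (u i)) * s
                + (μ : ℂ) * (∑ i, (starRingEnd ℂ) (u i) * u i))
              + (∑ i, (c i : ℂ) * (starRingEnd ℂ) (u i)) * e := by
              simp only [Finset.sum_add_distrib, Finset.sum_neg_distrib,
                Finset.sum_add_distrib, ← Finset.sum_mul, ← Finset.mul_sum]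
          _ = _ := by rw [hconjs]; ring
      have hA2 : z * ((starRingEnd ℂ) e * e) = -(s * (starRingEnd ℂ) e) := by
        calc z * ((starRingEnd ℂ) e * e) = (starRingEnd ℂ) e * (z * e) := by ring
          _ = (starRingEnd ℂ) e * (-s) := by rw [hee]
          _ = -(s * (starRingEnd ℂ) e) := by ring
      rw [← hnu]
      calc z * ((εu : ℂ) * (∑ i, (starRingEnd ℂ) (u i) * u i) + (starRingEnd ℂ) e * e)
          = (εu : ℂ) * (z * (∑ i, (starRingEnd ℂ) (u i) * u i))
            + z * ((starRingEnd ℂ) e * e) := by ring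
        _ = _ := by rw [hA1, hA2, hnu]; ring
    -- take real parts
    have hre : z.re * (εu * nuR + Complex.normSq e) = -(Complex.normSq s) - μ * nuR := by
      have h1 : ((starRingEnd ℂ) e * e) = (Complex.normSq e : ℂ) :=
        (Complex.normSq_eq_conj_mul_self).symm
      have h2 : ((starRingEnd ℂ) s * s) = (Complex.normSq s : ℂ) :=
        (Complex.normSq_eq_conj_mul_self).symm
      have h3 : ((starRingEnd ℂ) s * e - s * (starRingEnd ℂ) e).re = 0 := by
        have : s * (starRingEnd ℂ) e = (starRingEnd ℂ) ((starRingEnd ℂ) s * e) := by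
          simp [mul_comm]
        rw [this]
        simp [Complex.sub_conj]
      have := congrArg Complex.re key
      rw [h1, h2] at this
      simp only [Complex.add_re, Complex.sub_re, Complex.neg_re, Complex.mul_re,
        Complex.ofReal_re, Complex.ofReal_im, Complex.add_im, Complex.mul_im] at this h3 ⊢
      nlinarith [this, h3]
    have hcoef : 0 < εu * nuR + Complex.normSq e := by
      nlinarith [Complex.normSq_nonneg e, mul_pos hεu hnuRpos]
    nlinarith [Complex.normSq_nonneg s, hre, hcoef, hnuRpos, mul_pos hμ hnuRpos]
end

section
/- (Lemma 2, forward-learning part: exponential convergence under persistent excitation.) Let ω : ℝ≥0 → ℝ^h be a bounded, piecewise continuous signal that is persistently exciting, i.e., there exist α₁, α₂, δ > 0 such that α₂ I ⪰ ∫_{t₀}^{t₀+δ} ω(τ)ω(τ)ᵀ dτ ⪰ α₁ I for all t₀ ≥ 0. Then every solution w : ℝ≥0 → ℝ^h of ẇ(t) = −(w(t)·ω(t)) ω(t)ᵀ converges to zero exponentially: there exist constants K ≥ 1 and λ > 0 (depending only on α₁, α₂, δ, and the bound on ω) such that ‖w(t)‖ ≤ K e^{−λt} ‖w(0)‖ for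 all t ≥ 0. -/
open scoped RealInnerProductSpace
open MeasureTheory Set intervalIntegral Matrix

/-- Cauchy–Schwarz for interval integrals, via expanding `∫ (|f| - J/L)^2 ≥ 0`. -/
lemma cs_aux {a b : ℝ} (hab : a < b) {f : ℝ → ℝ}
    (hf : IntervalIntegrable (fun t => |f t|) volume a b)
    (hf2 : IntervalIntegrable (fun t => f t ^ 2) volume a b) :
    (∫ t in a..b, |f t|) ^ 2 ≤ (b - a) * ∫ t in a..b, f t ^ 2 := by
  set J := ∫ t in a..b, |f t| with hJ
  set S := ∫ t in a..b, f t ^ 2 with hS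
  set L := b - a with hL
  have hL0 : 0 < L := by simp [hL]; linarith
  set c : ℝ := J / L with hc
  have key : (0:ℝ) ≤ ∫ t in a..b, (|f t| - c) ^ 2 :=
    intervalIntegral.integral_nonneg hab.le (fun t _ => sq_nonneg _)
  have expand : (∫ t in a..b, (|f t| - c) ^ 2)
      = S - 2 * c * J + L * c ^ 2 := by
    have h1 : (fun t => (|f t| - c) ^ 2)
        = fun t => (f t ^ 2 - (2 * c) * |f t|) + c ^ 2 := by
      funext t
      have : |f t| ^ 2 = f t ^ 2 := sq_abs _
      rw [sub_sq, sq_abs]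
      ring
    rw [h1, intervalIntegral.integral_add (hf2.sub (hf.const_mul (2*c)))
      intervalIntegrable_const, intervalIntegral.integral_sub hf2 (hf.const_mul (2*c)),
      intervalIntegral.integral_const_mul, intervalIntegral.integral_const]
    simp [hL, smul_eq_mul]
    rw [hS, hJ]
  rw [expand] at key
  have h2 : 2 * c * J - L * c ^ 2 = J ^ 2 / L := by
    have hcL : c * L = J := by rw [hc]; exact div_mul_cancel₀ J hL0.ne'
    field_simp [hc]
    linear_combination (J - c * L) * hcL
  have h3 : J ^ 2 / L ≤ S := by nlinarith [key, h2]
  have h4 : J ^ 2 / L * L ≤ S * L := mul_le_mul_of_nonneg_right h3 hL0.le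
  rw [div_mul_cancel₀ _ hL0.ne'] at h4
  nlinarith [h4]

lemma intervalIntegrable_of_bounded {E : Type*} [NormedAddCommGroup E] {f : ℝ → E} {C u v : ℝ}
    (hf : AEStronglyMeasurable f (volume.restrict (Set.uIoc u v)))
    (hC : ∀ t, ‖f t‖ ≤ C) : IntervalIntegrable f volume u v := by
  rw [intervalIntegrable_iff]
  have hfin : volume (Set.uIoc u v) < ⊤ := by
    rw [Set.uIoc]
    simp [Real.volume_Ioc]
  exact (MeasureTheory.integrableOn_const (C := C) hfin.ne).mono' hf
    (Filter.Eventually.of_forall hC)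

set_option maxHeartbeats 1000000 in
/-- **Lemma 2, forward-learning part.** If the bounded measurable signal `ω` is
persistently exciting, i.e. `α₂ I ⪰ ∫_{t₀}^{t₀+δ} ω ωᵀ ⪰ α₁ I` (Loewner order) for all
`t₀ ≥ 0`, then every solution of `ẇ = −(w·ω(t)) ω(t)` decays exponentially, with constants
`K ≥ 1` and `λ > 0` depending only on `α₁, α₂, δ` and the bound `B` on `ω`. -/
theorem pe_implies_exponential_convergence {h : ℕ}
    (α₁ α₂ δ B : ℝ) (hα₁ : 0 < α₁) (hα₂ : 0 < α₂) (hδ : 0 < δ) :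
    ∃ K ≥ (1 : ℝ), ∃ lam > (0 : ℝ),
      ∀ ω : ℝ → EuclideanSpace ℝ (Fin h),
        Measurable ω →
        (∀ t : ℝ, ‖ω t‖ ≤ B) →
        (∀ t₀ : ℝ, 0 ≤ t₀ →
          ((Matrix.of fun i j => ∫ τ in t₀..t₀ + δ, ω τ i * ω τ j) -
            α₁ • (1 : Matrix (Fin h) (Fin h) ℝ)).PosSemidef ∧
          (α₂ • (1 : Matrix (Fin h) (Fin h) ℝ) -
            (Matrix.of fun i j => ∫ τ in t₀..t₀ + δ, ω τ i * ω τ j)).PosSemidef) →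
        ∀ w : ℝ → EuclideanSpace ℝ (Fin h),
          (∀ t ∈ Set.Ici (0 : ℝ),
            HasDerivWithinAt w (-(⟪w t, ω t⟫) • ω t) (Set.Ici 0) t) →
          ∀ t : ℝ, 0 ≤ t → ‖w t‖ ≤ K * Real.exp (-lam * t) * ‖w 0‖ := by
  -- the contraction factor over one PE window
  set c : ℝ := α₁ / (1 + δ ^ 2 * B ^ 4) with hcdef
  have hden : (0:ℝ) < 1 + δ ^ 2 * B ^ 4 := by positivity
  have hc0 : 0 < c := div_pos hα₁ hden
  set ρ : ℝ := max (1 - c) (1/2) with hρdef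
  have hρ0 : (0:ℝ) < ρ := lt_of_lt_of_le (by norm_num) (le_max_right _ _)
  have hρ1 : ρ < 1 := by
    apply max_lt
    · linarith
    · norm_num
  refine ⟨Real.sqrt ρ⁻¹, ?_, (-Real.log ρ) / (2 * δ), ?_, ?_⟩
  · rw [show (1:ℝ) = Real.sqrt 1 from (Real.sqrt_one).symm]
    exact Real.sqrt_le_sqrt ((one_le_inv_iff₀).mpr ⟨hρ0, hρ1.le⟩)
  · have : Real.log ρ < 0 := Real.log_neg hρ0 hρ1
    exact div_pos (by linarith) (by linarith)
  intro ω hmeas hB hPE w hw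
  have hB0 : 0 ≤ B := le_trans (norm_nonneg (ω 0)) (hB 0)
  have hwc : ContinuousOn w (Ici 0) := fun t ht => (hw t ht).continuousWithinAt
  set W : ℝ → EuclideanSpace ℝ (Fin h) := fun t => w (max t 0) with hWdef
  have hWcont : Continuous W :=
    hwc.comp_continuous (continuous_id.max continuous_const) (fun x => Set.mem_Ici.mpr (le_max_right _ _))
  have hWw : ∀ t : ℝ, 0 ≤ t → W t = w t := fun t ht => by
    simp only [hWdef, max_eq_left ht]
  set g : ℝ → ℝ := fun t => ⟪W t, ω t⟫ with hgdef
  have hgmeas : Measurable g := hWcont.measurable.inner hmeas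
  have hcomp : ∀ (τ : ℝ) (i : Fin h), |ω τ i| ≤ B := by
    intro τ i
    have h1 : (ω τ) i = ⟪EuclideanSpace.single i (1:ℝ), ω τ⟫ := by
      rw [EuclideanSpace.inner_single_left]; simp
    rw [h1]
    calc |⟪EuclideanSpace.single i (1:ℝ), ω τ⟫| ≤ ‖EuclideanSpace.single i (1:ℝ)‖ * ‖ω τ‖ :=
          abs_real_inner_le_norm _ _
      _ ≤ 1 * B := by
          apply mul_le_mul _ (hB τ) (norm_nonneg _) zero_le_one
          rw [EuclideanSpace.norm_single]; norm_num
      _ = B := one_mul B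
  have hVt : ∀ x ∈ Ioi (0:ℝ), HasDerivAt (fun t => ‖w t‖ ^ 2) (-2 * g x ^ 2) x := by
    intro x hx
    have hx' : (0:ℝ) ≤ x := le_of_lt hx
    have hwx : HasDerivAt w (-(⟪w x, ω x⟫) • ω x) x :=
      (hw x hx').hasDerivAt (Ici_mem_nhds hx)
    have h1 := hwx.inner ℝ hwx
    have h2 : (⟪w x, -(⟪w x, ω x⟫) • ω x⟫ + ⟪-(⟪w x, ω x⟫) • ω x, w x⟫) = -2 * g x ^ 2 := by
      rw [real_inner_smul_right, real_inner_smul_left, real_inner_comm (ω x) (w x)]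
      rw [hgdef]
      simp only [hWw x hx']
      ring_nf
      rw [real_inner_comm (ω x) (w x)]
    have h3 : (fun t => ‖w t‖ ^ 2) = fun t => ⟪w t, w t⟫ := by
      funext t; rw [real_inner_self_eq_norm_sq]
    rw [h3]
    exact h2 ▸ h1
  have hmono : AntitoneOn (fun t => ‖w t‖ ^ 2) (Ici 0) := by
    apply antitoneOn_of_deriv_nonpos (convex_Ici 0) (hwc.norm.pow 2)
    · intro x hx
      rw [interior_Ici] at hx
      exact (hVt x hx).differentiableAt.differentiableWithinAt
    · intro x hx
      rw [interior_Ici] at hx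
      rw [show ((fun x => ‖w x‖) ^ 2) = (fun t => ‖w t‖ ^ 2) from rfl, (hVt x hx).deriv]
      nlinarith [sq_nonneg (g x)]
  have hnm : ∀ s t : ℝ, 0 ≤ s → s ≤ t → ‖w t‖ ≤ ‖w s‖ := by
    intro s t hs hst
    have h1 := hmono hs (le_trans hs hst) hst
    have h2 := Real.sqrt_le_sqrt h1
    rwa [Real.sqrt_sq (norm_nonneg _), Real.sqrt_sq (norm_nonneg _)] at h2
  have hWb : ∀ t : ℝ, ‖W t‖ ≤ ‖w 0‖ := fun t =>
    hnm 0 (max t 0) le_rfl (le_max_right _ _)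
  have hgb : ∀ t : ℝ, |g t| ≤ ‖w 0‖ * B := by
    intro t
    calc |g t| ≤ ‖W t‖ * ‖ω t‖ := abs_real_inner_le_norm _ _
      _ ≤ ‖w 0‖ * B := mul_le_mul (hWb t) (hB t) (norm_nonneg _) (norm_nonneg _)
  have hII : ∀ (f : ℝ → ℝ) (C : ℝ), Measurable f → (∀ t, |f t| ≤ C) →
      ∀ u v : ℝ, IntervalIntegrable f volume u v := fun f C hfm hC u v =>
    intervalIntegrable_of_bounded hfm.aestronglyMeasurable
      (fun t => by rw [Real.norm_eq_abs]; exact hC t)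
  -- contraction over one window
  have hstep : ∀ t₀ : ℝ, 0 ≤ t₀ → ‖w (t₀ + δ)‖ ^ 2 ≤ ρ * ‖w t₀‖ ^ 2 := by
    intro t₀ ht₀
    have hI : Icc t₀ (t₀ + δ) ⊆ Ici (0:ℝ) := fun y hy => le_trans ht₀ hy.1
    have hab : t₀ ≤ t₀ + δ := by linarith
    set x : Fin h → ℝ := fun i => w t₀ i with hxdef
    set a : ℝ → ℝ := fun τ => ⟪w t₀, ω τ⟫ with hadef
    set bb : ℝ → ℝ := fun τ => g τ - a τ with hbdef
    have hameas : Measurable a := measurable_const.inner hmeas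
    have haB : ∀ τ, |a τ| ≤ ‖w t₀‖ * B := fun τ =>
      le_trans (abs_real_inner_le_norm _ _)
        (mul_le_mul_of_nonneg_left (hB τ) (norm_nonneg _))
    have hbB : ∀ τ, |bb τ| ≤ ‖w 0‖ * B + ‖w t₀‖ * B := fun τ =>
      le_trans (abs_sub _ _) (add_le_add (hgb τ) (haB τ))
    -- integrability
    have hgI : IntervalIntegrable g volume t₀ (t₀+δ) := hII g _ hgmeas hgb _ _
    have hgaI : ∀ u v : ℝ, IntervalIntegrable (fun τ => |g τ|) volume u v :=
      fun u v => (hII g _ hgmeas hgb u v).abs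
    have hg2I : IntervalIntegrable (fun τ => g τ ^ 2) volume t₀ (t₀+δ) :=
      hII _ ((‖w 0‖*B)^2) (hgmeas.pow_const 2)
        (fun t => by rw [abs_pow]; exact pow_le_pow_left₀ (abs_nonneg _) (hgb t) 2) _ _
    have haI : IntervalIntegrable a volume t₀ (t₀+δ) := hII a _ hameas haB _ _
    have ha2I : IntervalIntegrable (fun τ => a τ ^ 2) volume t₀ (t₀+δ) :=
      hII _ ((‖w t₀‖*B)^2) (hameas.pow_const 2)
        (fun t => by rw [abs_pow]; exact pow_le_pow_left₀ (abs_nonneg _) (haB t) 2) _ _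
    have hb2I : IntervalIntegrable (fun τ => bb τ ^ 2) volume t₀ (t₀+δ) :=
      hII _ ((‖w 0‖*B + ‖w t₀‖*B)^2) ((hgmeas.sub hameas).pow_const 2)
        (fun t => by rw [abs_pow]; exact pow_le_pow_left₀ (abs_nonneg _) (hbB t) 2) _ _
    have hw'I : ∀ u v : ℝ, IntervalIntegrable (fun s => -(g s) • ω s) volume u v :=
      fun u v => intervalIntegrable_of_bounded (C := ‖w 0‖*B*B)
        ((hgmeas.neg.smul hmeas).aestronglyMeasurable)
        (fun s => by
          rw [norm_smul, Real.norm_eq_abs, abs_neg]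
          exact mul_le_mul (hgb s) (hB s) (norm_nonneg _) (by positivity))
    set S := ∫ τ in t₀..t₀+δ, g τ ^ 2 with hSdef
    set J := ∫ τ in t₀..t₀+δ, |g τ| with hJdef
    have hS0 : 0 ≤ S := intervalIntegral.integral_nonneg hab (fun τ _ => sq_nonneg _)
    have hJ0 : 0 ≤ J := intervalIntegral.integral_nonneg hab (fun τ _ => abs_nonneg _)
    -- FTC for the Lyapunov function
    have hV : ‖w (t₀+δ)‖^2 = ‖w t₀‖^2 - 2*S := by
      have hFTC : ∫ τ in t₀..t₀+δ, (-2 * g τ ^ 2) = ‖w (t₀+δ)‖^2 - ‖w t₀‖^2 := by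
        apply intervalIntegral.integral_eq_sub_of_hasDeriv_right_of_le hab
          ((hwc.mono hI).norm.pow 2)
        · intro τ hτ
          have hτ0 : 0 < τ := lt_of_le_of_lt ht₀ hτ.1
          exact (hVt τ hτ0).hasDerivWithinAt
        · exact hg2I.const_mul (-2)
      rw [intervalIntegral.integral_const_mul, ← hSdef] at hFTC
      linarith [hFTC]
    -- FTC for w: displacement bound
    have hwdiff : ∀ τ ∈ Icc t₀ (t₀+δ), ‖W τ - w t₀‖ ≤ B * J := by
      intro τ hτ
      have hτ0 : 0 ≤ τ := le_trans ht₀ hτ.1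
      have hFTC : ∫ s in t₀..τ, (-(g s) • ω s) = w τ - w t₀ := by
        apply intervalIntegral.integral_eq_sub_of_hasDeriv_right_of_le hτ.1
          (hwc.mono (fun y hy => le_trans ht₀ hy.1))
        · intro s hs
          have hs0 : 0 < s := lt_of_le_of_lt ht₀ hs.1
          have hds : HasDerivAt w (-(⟪w s, ω s⟫) • ω s) s :=
            (hw s hs0.le).hasDerivAt (Ici_mem_nhds hs0)
          have heq : -(⟪w s, ω s⟫) • ω s = -(g s) • ω s := by
            rw [hgdef]; simp only [hWw s hs0.le]
          exact (heq ▸ hds).hasDerivWithinAt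
        · exact hw'I t₀ τ
      rw [hWw τ hτ0, ← hFTC]
      calc ‖∫ s in t₀..τ, (-(g s) • ω s)‖ ≤ ∫ s in t₀..τ, ‖(-(g s) • ω s)‖ :=
            intervalIntegral.norm_integral_le_integral_norm hτ.1
        _ ≤ ∫ s in t₀..τ, B * |g s| := by
            apply intervalIntegral.integral_mono_on hτ.1 ((hw'I t₀ τ).norm)
              ((hgaI t₀ τ).const_mul B)
            intro s _
            rw [norm_smul, Real.norm_eq_abs, abs_neg, mul_comm]
            exact mul_le_mul_of_nonneg_right (hB s) (abs_nonneg _)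
        _ = B * ∫ s in t₀..τ, |g s| := intervalIntegral.integral_const_mul _ _
        _ ≤ B * J := by
            apply mul_le_mul_of_nonneg_left _ hB0
            rw [hJdef]
            apply intervalIntegral.integral_mono_interval le_rfl hτ.1 hτ.2
              (Filter.Eventually.of_forall (fun s => abs_nonneg _)) (hgaI t₀ (t₀+δ))
    -- bound on the perturbation term
    have hbb : ∀ τ ∈ Icc t₀ (t₀+δ), |bb τ| ≤ B^2 * J := by
      intro τ hτ
      have hτ0 : 0 ≤ τ := le_trans ht₀ hτ.1
      have h1 : bb τ = ⟪W τ - w t₀, ω τ⟫ := by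
        rw [hbdef]
        simp only [hgdef, hadef, inner_sub_left]
      rw [h1]
      calc |⟪W τ - w t₀, ω τ⟫| ≤ ‖W τ - w t₀‖ * ‖ω τ‖ := abs_real_inner_le_norm _ _
        _ ≤ (B*J) * B := mul_le_mul (hwdiff τ hτ) (hB τ) (norm_nonneg _)
            (by positivity)
        _ = B^2 * J := by ring
    have hb2 : (∫ τ in t₀..t₀+δ, bb τ ^ 2) ≤ δ * (B^2*J)^2 := by
      calc (∫ τ in t₀..t₀+δ, bb τ ^ 2) ≤ ∫ _τ in t₀..t₀+δ, (B^2*J)^2 :=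
            intervalIntegral.integral_mono_on hab hb2I intervalIntegrable_const
              (fun τ hτ => by
                have h1 := hbb τ hτ
                have h2 := abs_le.mp h1
                exact sq_le_sq' (by linarith [h2.1]) h2.2)
        _ = δ * (B^2*J)^2 := by
            rw [intervalIntegral.integral_const, smul_eq_mul]; ring
    -- Cauchy–Schwarz
    have hCS : J^2 ≤ δ * S := by
      have h1 := cs_aux (show t₀ < t₀ + δ by linarith) (hgaI t₀ (t₀+δ)) hg2I
      have h0 : t₀ + δ - t₀ = δ := by ring
      rw [h0, ← hJdef, ← hSdef] at h1
      exact h1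
    -- expansion bound
    have hA2 : (∫ τ in t₀..t₀+δ, a τ ^ 2) ≤ 2*S + 2*(δ*(B^2*J)^2) := by
      have h1 : (∫ τ in t₀..t₀+δ, a τ ^ 2) ≤ ∫ τ in t₀..t₀+δ, (2*g τ^2 + 2*bb τ^2) := by
        apply intervalIntegral.integral_mono_on hab ha2I
          ((hg2I.const_mul 2).add (hb2I.const_mul 2))
        intro τ _
        have h2 : a τ = g τ - bb τ := by rw [hbdef]; ring
        rw [h2]
        nlinarith [sq_nonneg (g τ + bb τ)]
      rw [intervalIntegral.integral_add (hg2I.const_mul 2) (hb2I.const_mul 2),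
        intervalIntegral.integral_const_mul, intervalIntegral.integral_const_mul,
        ← hSdef] at h1
      linarith [hb2]
    -- persistency of excitation lower bound
    have hPE1 : α₁ * ‖w t₀‖^2 ≤ ∫ τ in t₀..t₀+δ, a τ ^ 2 := by
      obtain ⟨_, hq⟩ := Matrix.posSemidef_iff_dotProduct_mulVec.mp (hPE t₀ ht₀).1
      have hq' := hq x
      rw [star_trivial, Matrix.sub_mulVec, dotProduct_sub,
        Matrix.smul_mulVec, Matrix.one_mulVec, dotProduct_smul] at hq'
      have hprod : ∀ i j : Fin h,
          IntervalIntegrable (fun τ => x i * ((ω τ i * ω τ j) * x j)) volume t₀ (t₀+δ) := by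
        intro i j
        have hm : Measurable (fun τ => ω τ i * ω τ j) :=
          ((EuclideanSpace.proj i).continuous.measurable.comp hmeas).mul ((EuclideanSpace.proj j).continuous.measurable.comp hmeas)
        have hbd : ∀ τ, |ω τ i * ω τ j| ≤ B * B := fun τ => by
          rw [abs_mul]
          exact mul_le_mul (hcomp τ i) (hcomp τ j) (abs_nonneg _) hB0
        exact ((hII _ (B*B) hm hbd t₀ (t₀+δ)).mul_const (x j)).const_mul (x i)
      have hqq : x ⬝ᵥ ((Matrix.of fun i j => ∫ τ in t₀..t₀ + δ, ω τ i * ω τ j) *ᵥ x)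
          = ∫ τ in t₀..t₀+δ, a τ ^ 2 := by
        have h2 : ∀ τ, a τ ^ 2 = ∑ i : Fin h, ∑ j : Fin h, x i * ((ω τ i * ω τ j) * x j) := by
          intro τ
          have ha' : a τ = ∑ i : Fin h, x i * ω τ i := by
            rw [hadef]
            simp [PiLp.inner_apply, RCLike.inner_apply, hxdef]
            exact Finset.sum_congr rfl (fun i _ => mul_comm _ _)
          rw [ha', sq, Finset.sum_mul_sum]
          apply Finset.sum_congr rfl; intro i _
          apply Finset.sum_congr rfl; intro j _
          ring
        calc x ⬝ᵥ ((Matrix.of fun i j => ∫ τ in t₀..t₀ + δ, ω τ i * ω τ j) *ᵥ x)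
            = ∑ i : Fin h, ∑ j : Fin h, x i * ((∫ τ in t₀..t₀ + δ, ω τ i * ω τ j) * x j) := by
              simp [dotProduct, Matrix.mulVec, Finset.mul_sum, Matrix.of_apply]
          _ = ∑ i : Fin h, ∑ j : Fin h, ∫ τ in t₀..t₀+δ, x i * ((ω τ i * ω τ j) * x j) := by
              apply Finset.sum_congr rfl; intro i _
              apply Finset.sum_congr rfl; intro j _
              rw [intervalIntegral.integral_const_mul, intervalIntegral.integral_mul_const]
          _ = ∫ τ in t₀..t₀+δ, ∑ i : Fin h, ∑ j : Fin h, x i * ((ω τ i * ω τ j) * x j) := by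
              have e1 : ∀ i : Fin h,
                  (∫ τ in t₀..t₀+δ, ∑ j : Fin h, x i * ((ω τ i * ω τ j) * x j))
                    = ∑ j : Fin h, ∫ τ in t₀..t₀+δ, x i * ((ω τ i * ω τ j) * x j) :=
                fun i => intervalIntegral.integral_finset_sum (fun j _ => hprod i j)
              have hsumI : ∀ i : Fin h, IntervalIntegrable
                  (fun τ => ∑ j : Fin h, x i * ((ω τ i * ω τ j) * x j)) volume t₀ (t₀+δ) := by
                intro i
                have h1 := IntervalIntegrable.sum (μ := volume) (a := t₀) (b := t₀+δ) Finset.univ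
                  (f := fun j τ => x i * ((ω τ i * ω τ j) * x j)) (fun j _ => hprod i j)
                have h2 : (∑ j : Fin h, fun τ => x i * ((ω τ i * ω τ j) * x j))
                    = fun τ => ∑ j : Fin h, x i * ((ω τ i * ω τ j) * x j) := by
                  funext τ
                  simp [Finset.sum_apply]
                rwa [h2] at h1
              have e2 : (∫ τ in t₀..t₀+δ, ∑ i : Fin h, ∑ j : Fin h, x i * ((ω τ i * ω τ j) * x j))
                  = ∑ i : Fin h, ∫ τ in t₀..t₀+δ, ∑ j : Fin h, x i * ((ω τ i * ω τ j) * x j) :=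
                intervalIntegral.integral_finset_sum (fun i _ => hsumI i)
              rw [e2]
              exact Finset.sum_congr rfl (fun i _ => (e1 i).symm)
          _ = ∫ τ in t₀..t₀+δ, a τ ^ 2 := by
              apply intervalIntegral.integral_congr
              intro τ _
              exact (h2 τ).symm
      have hxx : x ⬝ᵥ x = ‖w t₀‖^2 := by
        rw [← real_inner_self_eq_norm_sq]
        simp [dotProduct, PiLp.inner_apply, RCLike.inner_apply, hxdef]
        rw [EuclideanSpace.norm_eq, Real.sq_sqrt (Finset.sum_nonneg (fun i _ => sq_nonneg _))]
        exact Finset.sum_congr rfl (fun i _ => by rw [Real.norm_eq_abs, sq_abs, sq])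
      rw [hqq, hxx, smul_eq_mul] at hq'
      linarith
    -- put it together
    have hJS : 2*δ*B^4*(J^2) ≤ 2*δ*B^4*(δ*S) :=
      mul_le_mul_of_nonneg_left hCS (by positivity)
    have hstep1 : α₁ * ‖w t₀‖^2 ≤ 2*S + 2*(δ*(B^2*J)^2) := le_trans hPE1 hA2
    have hfin1 : α₁ * ‖w t₀‖^2 ≤ 2*S + 2*δ^2*B^4*S := by
      have he1 : 2*(δ*(B^2*J)^2) = 2*δ*B^4*(J^2) := by ring
      have he2 : 2*δ*B^4*(δ*S) = 2*δ^2*B^4*S := by ring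
      linarith
    have hc2 : c * ‖w t₀‖^2 ≤ 2*S := by
      rw [hcdef, div_mul_eq_mul_div, div_le_iff₀ hden]
      have he3 : 2*S + 2*δ^2*B^4*S = 2*S*(1+δ^2*B^4) := by ring
      linarith
    have hV0 : 0 ≤ ‖w t₀‖^2 := sq_nonneg _
    have hρc : 1 - c ≤ ρ := le_max_left _ _
    calc ‖w (t₀+δ)‖^2 = ‖w t₀‖^2 - 2*S := hV
      _ ≤ ‖w t₀‖^2 - c*‖w t₀‖^2 := by linarith
      _ = (1-c) * ‖w t₀‖^2 := by ring
      _ ≤ ρ * ‖w t₀‖^2 := mul_le_mul_of_nonneg_right hρc hV0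
  -- iterate
  have hiter : ∀ n : ℕ, ‖w ((n : ℝ) * δ)‖ ^ 2 ≤ ρ ^ n * ‖w 0‖ ^ 2 := by
    intro n
    induction n with
    | zero => simp
    | succ n ih =>
        have hn0 : (0:ℝ) ≤ (n:ℝ) * δ := by positivity
        have h1 : ((n + 1 : ℕ) : ℝ) * δ = (n:ℝ) * δ + δ := by push_cast; ring
        rw [h1]
        calc ‖w ((n:ℝ) * δ + δ)‖ ^ 2 ≤ ρ * ‖w ((n:ℝ) * δ)‖ ^ 2 := hstep _ hn0
          _ ≤ ρ * (ρ ^ n * ‖w 0‖ ^ 2) := mul_le_mul_of_nonneg_left ih hρ0.le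
          _ = ρ ^ (n + 1) * ‖w 0‖ ^ 2 := by ring
  -- conclude
  intro t ht
  set n := Nat.floor (t / δ) with hndef
  have hnδ : (n:ℝ) * δ ≤ t := by
    have h1 := Nat.floor_le (div_nonneg ht hδ.le)
    calc (n:ℝ) * δ ≤ (t/δ) * δ := mul_le_mul_of_nonneg_right h1 hδ.le
      _ = t := div_mul_cancel₀ t hδ.ne'
  have hn0 : (0:ℝ) ≤ (n:ℝ) * δ := by positivity
  have h1 : ‖w t‖ ^ 2 ≤ ρ ^ n * ‖w 0‖ ^ 2 :=
    le_trans (hmono hn0 ht hnδ) (hiter n)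
  have hexp : (ρ:ℝ) ^ n ≤ ρ⁻¹ * Real.exp ((Real.log ρ / δ) * t) := by
    have h2 : t/δ - 1 ≤ (n:ℝ) := by
      have := Nat.lt_floor_add_one (t/δ)
      rw [← hndef] at this
      linarith
    have h3 : (ρ:ℝ) ^ (n:ℝ) ≤ ρ ^ (t/δ - 1) := Real.rpow_le_rpow_of_exponent_ge hρ0 hρ1.le h2
    rw [Real.rpow_natCast] at h3
    refine h3.trans_eq ?_
    rw [Real.rpow_def_of_pos hρ0]
    have h4 : ρ⁻¹ = Real.exp (-Real.log ρ) := by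
      rw [Real.exp_neg, Real.exp_log hρ0]
    rw [h4, ← Real.exp_add]
    congr 1
    field_simp
    ring
  have hfin : ‖w t‖ ^ 2 ≤
      (Real.sqrt ρ⁻¹ * Real.exp (-((-Real.log ρ) / (2 * δ)) * t) * ‖w 0‖) ^ 2 := by
    have hK2 : (Real.sqrt ρ⁻¹) ^ 2 = ρ⁻¹ := Real.sq_sqrt (inv_nonneg.mpr hρ0.le)
    have hsq : (Real.sqrt ρ⁻¹ * Real.exp (-((-Real.log ρ) / (2 * δ)) * t) * ‖w 0‖) ^ 2
        = (ρ⁻¹ * Real.exp ((Real.log ρ / δ) * t)) * ‖w 0‖ ^ 2 := by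
      rw [mul_pow, mul_pow, hK2, sq (Real.exp _), ← Real.exp_add]
      have : -((-Real.log ρ) / (2 * δ)) * t + -((-Real.log ρ) / (2 * δ)) * t
          = (Real.log ρ / δ) * t := by field_simp; ring
      rw [this]
    rw [hsq]
    calc ‖w t‖ ^ 2 ≤ ρ ^ n * ‖w 0‖ ^ 2 := h1
      _ ≤ (ρ⁻¹ * Real.exp ((Real.log ρ / δ) * t)) * ‖w 0‖ ^ 2 :=
          mul_le_mul_of_nonneg_right hexp (sq_nonneg _)
  have hRHS : 0 ≤ Real.sqrt ρ⁻¹ * Real.exp (-((-Real.log ρ) / (2 * δ)) * t) * ‖w 0‖ := by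
    positivity
  have h5 := Real.sqrt_le_sqrt hfin
  rwa [Real.sqrt_sq (norm_nonneg _), Real.sqrt_sq hRHS] at h5
end
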